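/- arXiv:2603.28527 — 3 statements merged into one kernel-verified Lean document; each statement's English description precedes it below -/
import Mathlib

section
/- Let H_L = (S† ⊗ I₂) · U(π/4) · (I₂ ⊗ S) on ℂ²⊗ℂ², where U(θ) = cos θ·I₄ + i sin θ·SWAP and S = diag(1,i). Then H_L† · U(3π/4) · H_L = e^{3iπ/4} · diag(1, 1, i, 1) in the basis |00⟩,|01⟩,|10⟩,|11⟩; i.e. up to global phase this is a logical phase gate S_L = diag(1, i) on the logical subspace span{|01⟩,|10⟩}. -/
open Matrix Complex

noncomputable section

/-- The two-qubit SWAP gate in the basis `|00⟩,|01⟩,|10⟩,|11⟩`. -/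
def SWAP : Matrix (Fin 4) (Fin 4) ℂ :=
  !![1,0,0,0; 0,0,1,0; 0,1,0,0; 0,0,0,1]

/-- The exchange gate `U(θ) = cos θ·I₄ + i sin θ·SWAP`. -/
def U (θ : ℝ) : Matrix (Fin 4) (Fin 4) ℂ :=
  (Real.cos θ : ℂ) • (1 : Matrix (Fin 4) (Fin 4) ℂ) + (Complex.I * (Real.sin θ : ℂ)) • SWAP

/-- `S† ⊗ I₂ = diag(1, 1, -i, -i)` in the basis `|00⟩,|01⟩,|10⟩,|11⟩`. -/
def SdagI : Matrix (Fin 4) (Fin 4) ℂ := Matrix.diagonal ![1, 1, -Complex.I, -Complex.I]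

/-- `I₂ ⊗ S = diag(1, i, 1, i)` in the basis `|00⟩,|01⟩,|10⟩,|11⟩`. -/
def IS : Matrix (Fin 4) (Fin 4) ℂ := Matrix.diagonal ![1, Complex.I, 1, Complex.I]

/-- The logical Hadamard `H_L = (S† ⊗ I₂) · U(π/4) · (I₂ ⊗ S)`. -/
def HL : Matrix (Fin 4) (Fin 4) ℂ := SdagI * U (Real.pi / 4) * IS

/-! Up to the factor `√2/2`, `H_L` is `(1+i) ⊕ i·[[1,1],[1,-1]] ⊕ (1+i)`: a unitary acting as
a Hadamard on the logical subspace. Conjugating by it turns SWAP into the logical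
`Z = diag(1,1,-1,1)`, so `H_L† U(θ) H_L = diag(e^{iθ}, e^{iθ}, e^{-iθ}, e^{iθ})`, and at
`θ = 3π/4` one has `e^{-iθ} = e^{iθ}·i`. -/

lemma HL_eq : HL = ((Real.sqrt 2 / 2 : ℝ) : ℂ) •
    !![1 + I, 0, 0, 0; 0, I, I, 0; 0, I, -I, 0; 0, 0, 0, 1 + I] := by
  rw [HL, U, Real.cos_pi_div_four, Real.sin_pi_div_four]
  ext i j
  fin_cases i <;> fin_cases j <;>
    simp [SdagI, IS, SWAP, Matrix.mul_apply, Fin.sum_univ_four, Matrix.one_apply] <;>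
    ring_nf <;> simp only [I_sq, I_pow_three] <;> ring

lemma ofReal_half_sqrt_two_mul_self :
    ((Real.sqrt 2 / 2 : ℝ) : ℂ) * ((Real.sqrt 2 / 2 : ℝ) : ℂ) = 1 / 2 := by
  rw [← ofReal_mul, div_mul_div_comm, Real.mul_self_sqrt zero_le_two]
  norm_num

lemma HL_conjTranspose_mul_self : HLᴴ * HL = 1 := by
  simp only [HL_eq, conjTranspose_smul, star_def, conj_ofReal, smul_mul_assoc, mul_smul_comm,
    smul_smul, ofReal_half_sqrt_two_mul_self]
  ext i j
  fin_cases i <;> fin_cases j <;>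
    simp [Matrix.mul_apply, Fin.sum_univ_four] <;> ring_nf <;> simp only [I_sq] <;> ring

lemma HL_conjTranspose_mul_SWAP_mul_HL : HLᴴ * SWAP * HL = diagonal ![1, 1, -1, 1] := by
  simp only [HL_eq, conjTranspose_smul, star_def, conj_ofReal, smul_mul_assoc, mul_smul_comm,
    smul_smul, ofReal_half_sqrt_two_mul_self]
  ext i j
  fin_cases i <;> fin_cases j <;>
    simp [SWAP, Matrix.mul_apply, Fin.sum_univ_four] <;> ring_nf <;> simp only [I_sq] <;> ring

lemma HL_conjTranspose_mul_U_mul_HL (θ : ℝ) :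
    HLᴴ * U θ * HL = diagonal ![exp (θ * I), exp (θ * I), exp (-θ * I), exp (θ * I)] := by
  have hZ : HLᴴ * U θ * HL =
      (Real.cos θ : ℂ) • 1 + (I * Real.sin θ) • diagonal ![1, 1, -1, 1] := by
    rw [U, Matrix.mul_add, Matrix.add_mul, Matrix.mul_smul, Matrix.smul_mul, Matrix.mul_one,
      HL_conjTranspose_mul_self, Matrix.mul_smul, Matrix.smul_mul, HL_conjTranspose_mul_SWAP_mul_HL]
  rw [hZ, ← diagonal_one, ← diagonal_smul, ← diagonal_smul, diagonal_add]
  simp only [← ofReal_neg, exp_ofReal_mul_I, Real.cos_neg, Real.sin_neg]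
  congr 1
  ext i
  fin_cases i <;> simp <;> ring

lemma exp_neg_three_pi_div_four_mul_I :
    exp (-(3 * Real.pi / 4) * I) = exp (3 * Real.pi / 4 * I) * I :=
  calc exp (-(3 * Real.pi / 4) * I)
      = exp (-(3 * Real.pi / 4) * I + 2 * Real.pi * I) := (exp_periodic _).symm
    _ = exp (3 * Real.pi / 4 * I + Real.pi / 2 * I) := by congr 1; ring
    _ = exp (3 * Real.pi / 4 * I) * I := by rw [exp_add, exp_pi_div_two_mul_I]

/-- `H_L† · U(3π/4) · H_L = e^{3iπ/4} · diag(1, 1, i, 1)`: the logical phase gate. -/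
theorem logical_phase_gate :
    HLᴴ * U (3 * Real.pi / 4) * HL
      = Complex.exp (Complex.I * (3 * Real.pi / 4)) • Matrix.diagonal ![1, 1, Complex.I, 1] := by
  rw [HL_conjTranspose_mul_U_mul_HL, ← diagonal_smul]
  push_cast
  rw [exp_neg_three_pi_div_four_mul_I, mul_comm I]
  congr 1
  ext i
  fin_cases i <;> simp
end
end

section
/- The number arccos(5/8)/π is irrational. Equivalently, the angle φ = arccos(5/8) is an irrational multiple of π, so any rotation of SU(2) by angle φ generates an infinite cyclic subgroup. -/
open Real

/-- Niven's theorem: at a rational multiple of `π`, a rational value of `cos` lies in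
`{-1, -1/2, 0, 1/2, 1}`. -/
theorem irrational_arccos_div_pi {x : ℝ} (hx₁ : -1 ≤ x) (hx₂ : x ≤ 1) (hx : ∃ q : ℚ, x = q)
    (hx_notMem : x ∉ ({-1, -1 / 2, 0, 1 / 2, 1} : Set ℝ)) :
    Irrational (arccos x / π) := by
  rintro ⟨r, hr⟩
  have hcos : cos (arccos x) = x := cos_arccos hx₁ hx₂
  have harccos : arccos x = r * π := by rw [hr]; field_simp [pi_ne_zero]
  have hniven := niven ⟨r, harccos⟩ (hcos.symm ▸ hx)
  exact hx_notMem (hcos ▸ hniven)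

/-- `arccos(5/8)/π` is irrational: the angle `φ = arccos(5/8)` is an irrational multiple
of `π`. -/
theorem arccos_five_eighths_div_pi_irrational :
    Irrational (Real.arccos (5 / 8) / Real.pi) :=
  irrational_arccos_div_pi (by norm_num) (by norm_num) ⟨5 / 8, by norm_num⟩ (by norm_num)
end

section
/- Call a word Y ∈ {0,1}ⁿ a valid Yamanouchi symbol if every prefix of Y contains at least as many 0s as 1s. Let n be even and let Y₁, Y₂ ∈ {0,1}ⁿ be valid Yamanouchi symbols with the same number of 1-entries. Then there exists a sequence of at most n(n−2)/4 adjacent transpositions (swaps of positions i and i+1) transforming Y₁ into Y₂ such that every intermediate word in the sequence is also a valid Yamanouchi symbol. -/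
/-- A word `Y ∈ {0,1}ⁿ` is a valid Yamanouchi symbol if every prefix contains at least
as many 0s as 1s. -/
def IsYamanouchi {n : ℕ} (Y : Fin n → Fin 2) : Prop :=
  ∀ m : ℕ,
    (Finset.univ.filter fun i : Fin n => (i : ℕ) < m ∧ Y i = 1).card ≤
      (Finset.univ.filter fun i : Fin n => (i : ℕ) < m ∧ Y i = 0).card

/-- Apply a list of transpositions of positions to a word. -/
def applySwaps {n : ℕ} (L : List (Fin n × Fin n)) (Y : Fin n → Fin 2) : Fin n → Fin 2 :=
  L.foldl (fun Z p => Z ∘ Equiv.swap p.1 p.2) Y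

/-!
Encode a word `Y` by its profile `c m = #{i < m | Y i = 1}`: `Y` is Yamanouchi iff
`2 * c m ≤ min m n` for all `m`, and a word is determined by its profile. Swapping an adjacent
pair `Y i ≠ Y (i + 1)` changes the profile only at `i + 1`, and there by `± 1`. For distinct
words of equal weight there is always such a swap that moves the profile of the first word one
step towards that of the second at a point where it stays between the two, so the Yamanouchi
property is kept; hence `∑ m < n, |c₁ m - c₂ m|` swaps suffice. Both profiles take values in
`[0, m / 2]`, so this sum is at most `∑ m < n, m / 2 = n * (n - 2) / 4` for even `n`.
-/

open Finset

section PrefixCount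

variable {n : ℕ} {α : Type*} [DecidableEq α]

def prefixCount (Y : Fin n → α) (b : α) (m : ℕ) : ℕ :=
  #{i : Fin n | (i : ℕ) < m ∧ Y i = b}

@[simp]
lemma prefixCount_zero (Y : Fin n → α) (b : α) : prefixCount Y b 0 = 0 := by
  simp [prefixCount]

lemma prefixCount_self (Y : Fin n → α) (b : α) : prefixCount Y b n = #{i | Y i = b} := by
  simp [prefixCount]

lemma prefixCount_of_le (Y : Fin n → α) (b : α) {m : ℕ} (hm : n ≤ m) :
    prefixCount Y b m = prefixCount Y b n := by
  unfold prefixCount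
  congr 1
  ext i
  simp only [mem_filter, mem_univ, true_and, and_congr_left_iff]
  intro
  omega

lemma prefixCount_add_one (Y : Fin n → α) (b : α) (m : ℕ) :
    prefixCount Y b (m + 1) =
      prefixCount Y b m + if h : m < n then (if Y ⟨m, h⟩ = b then 1 else 0) else 0 := by
  rcases lt_or_ge m n with hm | hm
  · unfold prefixCount
    rw [dif_pos hm]
    split_ifs with hb
    · rw [← card_insert_of_notMem (a := ⟨m, hm⟩) (by simp)]
      congr 1
      ext j
      simp only [mem_filter, mem_univ, true_and, mem_insert]
      grind
    · rw [add_zero]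
      congr 1
      ext j
      simp only [mem_filter, mem_univ, true_and]
      grind
  · rw [prefixCount_of_le _ _ hm, prefixCount_of_le _ _ (by omega), dif_neg (by omega), add_zero]

lemma prefixCount_add_one_le (Y : Fin n → α) (b : α) (m : ℕ) :
    prefixCount Y b (m + 1) ≤ prefixCount Y b m + 1 := by
  rw [prefixCount_add_one]
  split_ifs <;> omega

lemma prefixCount_val_add_one (Y : Fin n → α) (b : α) (i : Fin n) :
    prefixCount Y b (i + 1) = prefixCount Y b i + if Y i = b then 1 else 0 := by
  simp [prefixCount_add_one]

lemma prefixCount_comp_perm (Y : Fin n → α) (b : α) {m : ℕ} (σ : Equiv.Perm (Fin n))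
    (hσ : ∀ i, (σ i : ℕ) < m ↔ (i : ℕ) < m) :
    prefixCount (Y ∘ σ) b m = prefixCount Y b m :=
  card_equiv σ fun i => by simp [hσ]

lemma prefixCount_comp_swap_of_ne (Y : Fin n → α) (b : α) {i j : Fin n}
    (hij : (j : ℕ) = i + 1) {m : ℕ} (hm : m ≠ j) :
    prefixCount (Y ∘ Equiv.swap i j) b m = prefixCount Y b m :=
  prefixCount_comp_perm Y b _ fun k => by
    rw [Equiv.swap_apply_def]
    split_ifs with hi hj <;> subst_vars <;> omega

lemma prefixCount_comp_swap_at (Y : Fin n → α) (b : α) {i j : Fin n} (hij : (j : ℕ) = i + 1) :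
    prefixCount (Y ∘ Equiv.swap i j) b j = prefixCount Y b i + if Y j = b then 1 else 0 := by
  rw [hij, prefixCount_val_add_one, prefixCount_comp_swap_of_ne Y b hij (by omega)]
  simp

lemma exists_adjacent_of_apply_eq_of_prefixCount_lt {Y Z : Fin n → α} {b : α} (j : Fin n)
    (hj : Y j = b) (hlt : prefixCount Y b j < prefixCount Z b j) :
    ∃ i j : Fin n, (j : ℕ) = i + 1 ∧ Y i ≠ b ∧ Y j = b ∧
      prefixCount Y b j < prefixCount Z b j := by
  obtain ⟨k, hk⟩ : ∃ k, (j : ℕ) = k := ⟨_, rfl⟩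
  induction k generalizing j with
  | zero => simp [hk] at hlt
  | succ k ih =>
    let i : Fin n := ⟨k, by omega⟩
    by_cases hi : Y i = b
    · have hY : prefixCount Y b (k + 1) = prefixCount Y b k + 1 := by
        simpa [hi] using prefixCount_val_add_one Y b i
      have hZ := prefixCount_add_one_le Z b k
      rw [hk] at hlt
      exact ih i hi (by simp only [i]; omega) rfl
    · exact ⟨i, j, hk, hi, hj, hlt⟩

/-- A deficit of `b`s in `Y` against `Z` persists to the right until `Y` reads `b`, which it must
since the totals agree, and from there it persists to the left along that run of `b`s. -/
lemma exists_adjacent_of_prefixCount_lt {Y Z : Fin n → α} {b : α}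
    (hw : prefixCount Y b n = prefixCount Z b n) {m : ℕ}
    (hm : prefixCount Y b m < prefixCount Z b m) :
    ∃ i j : Fin n, (j : ℕ) = i + 1 ∧ Y i ≠ b ∧ Y j = b ∧
      prefixCount Y b j < prefixCount Z b j := by
  obtain ⟨j, hj, hlt⟩ : ∃ j : Fin n, Y j = b ∧ prefixCount Y b j < prefixCount Z b j := by
    by_contra! h
    have hlt : ∀ k, prefixCount Y b (m + k) < prefixCount Z b (m + k) := by
      intro k
      induction k with
      | zero => exact hm
      | succ k ih =>
        rw [← add_assoc, prefixCount_add_one, prefixCount_add_one]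
        split_ifs with _ hY <;> first | omega | exact absurd (h _ hY) ih.not_ge
    have hn := hlt n
    rw [prefixCount_of_le Y b (by omega), prefixCount_of_le Z b (by omega), hw] at hn
    exact lt_irrefl _ hn
  exact exists_adjacent_of_apply_eq_of_prefixCount_lt j hj hlt

end PrefixCount

lemma sum_dist_add_one_of_eq_of_ne {s : Finset ℕ} {f f' g : ℕ → ℕ} {k : ℕ} (hk : k ∈ s)
    (hf : ∀ m ≠ k, f' m = f m) (hfk : Nat.dist (f' k) (g k) + 1 = Nat.dist (f k) (g k)) :
    ∑ m ∈ s, Nat.dist (f' m) (g m) + 1 = ∑ m ∈ s, Nat.dist (f m) (g m) := by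
  rw [← add_sum_erase s _ hk, ← add_sum_erase s _ hk,
    sum_congr rfl fun m hm => by rw [hf m (ne_of_mem_erase hm)]]
  omega

lemma sum_range_two_mul_div_two (s : ℕ) : ∑ m ∈ range (2 * s), m / 2 = s * (s - 1) := by
  induction s with
  | zero => simp
  | succ s ih =>
    rw [show 2 * (s + 1) = 2 * s + 1 + 1 by ring, sum_range_succ, sum_range_succ, ih,
      show 2 * s / 2 = s by omega, show (2 * s + 1) / 2 = s by omega]
    cases s with
    | zero => rfl
    | succ t => simp only [Nat.add_sub_cancel]; ring

section Binary

variable {n : ℕ}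

lemma prefixCount_zero_add_prefixCount_one (Y : Fin n → Fin 2) (m : ℕ) :
    prefixCount Y 0 m + prefixCount Y 1 m = min m n := by
  induction m with
  | zero => simp
  | succ m ih =>
    rw [prefixCount_add_one, prefixCount_add_one]
    split_ifs <;> omega

lemma isYamanouchi_iff (Y : Fin n → Fin 2) :
    IsYamanouchi Y ↔ ∀ m, 2 * prefixCount Y 1 m ≤ min m n :=
  forall_congr' fun m => by
    have := prefixCount_zero_add_prefixCount_one Y m
    unfold prefixCount at this ⊢
    omega

lemma eq_of_prefixCount_one_eq {Y Z : Fin n → Fin 2}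
    (h : ∀ m, prefixCount Y 1 m = prefixCount Z 1 m) : Y = Z := by
  funext i
  have hY := prefixCount_val_add_one Y 1 i
  have hZ := prefixCount_val_add_one Z 1 i
  rw [h, h] at hY
  split_ifs at hY hZ <;> omega

def prefixDist (Y Z : Fin n → Fin 2) : ℕ :=
  ∑ m ∈ range n, Nat.dist (prefixCount Y 1 m) (prefixCount Z 1 m)

lemma prefixDist_le {Y Z : Fin n → Fin 2} (hY : IsYamanouchi Y) (hZ : IsYamanouchi Z)
    (hn : Even n) : prefixDist Y Z ≤ n * (n - 2) / 4 := by
  obtain ⟨s, rfl⟩ := hn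
  calc prefixDist Y Z ≤ ∑ m ∈ range (s + s), m / 2 := sum_le_sum fun m _ => by
        have := (isYamanouchi_iff Y).mp hY m
        have := (isYamanouchi_iff Z).mp hZ m
        unfold Nat.dist
        omega
    _ = (s + s) * (s + s - 2) / 4 := by
      rw [← two_mul, sum_range_two_mul_div_two]
      refine (Nat.div_eq_of_eq_mul_left (by norm_num) ?_).symm
      cases s with
      | zero => rfl
      | succ t => rw [show 2 * (t + 1) - 2 = 2 * t by omega, Nat.add_sub_cancel]; ring

lemma exists_adjacent_toward {Y Z : Fin n → Fin 2} (hw : prefixCount Y 1 n = prefixCount Z 1 n)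
    (hne : Y ≠ Z) :
    ∃ i j : Fin n, (j : ℕ) = i + 1 ∧
      (Y i = 0 ∧ Y j = 1 ∧ prefixCount Y 1 j < prefixCount Z 1 j ∨
        Y i = 1 ∧ Y j = 0 ∧ prefixCount Z 1 j < prefixCount Y 1 j) := by
  obtain ⟨m, hm⟩ : ∃ m, prefixCount Y 1 m ≠ prefixCount Z 1 m := by
    by_contra! h
    exact hne (eq_of_prefixCount_one_eq h)
  have hsum := @prefixCount_zero_add_prefixCount_one n
  rcases hm.lt_or_gt with hlt | hgt
  · obtain ⟨i, j, hij, hi, hj, h⟩ := exists_adjacent_of_prefixCount_lt hw hlt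
    exact ⟨i, j, hij, Or.inl ⟨by omega, hj, h⟩⟩
  · have hw₀ : prefixCount Y 0 n = prefixCount Z 0 n := by
      have := hsum Y n; have := hsum Z n; omega
    obtain ⟨i, j, hij, hi, hj, h⟩ :=
      exists_adjacent_of_prefixCount_lt hw₀ (m := m)
        (by have := hsum Y m; have := hsum Z m; omega)
    refine ⟨i, j, hij, Or.inr ⟨by omega, hj, ?_⟩⟩
    have := hsum Y j; have := hsum Z j; omega

lemma eq_of_prefixDist_eq_zero {Y Z : Fin n → Fin 2} (hw : prefixCount Y 1 n = prefixCount Z 1 n)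
    (hd : prefixDist Y Z = 0) : Y = Z := by
  refine eq_of_prefixCount_one_eq fun m => ?_
  rcases lt_or_ge m n with hm | hm
  · exact Nat.eq_of_dist_eq_zero (sum_eq_zero_iff.mp hd m (mem_range.mpr hm))
  · rw [prefixCount_of_le Y 1 hm, prefixCount_of_le Z 1 hm, hw]

lemma exists_adjacent_swap_closer {Y Z : Fin n → Fin 2} (hY : IsYamanouchi Y)
    (hZ : IsYamanouchi Z) (hw : prefixCount Y 1 n = prefixCount Z 1 n) (hne : Y ≠ Z) :
    ∃ i j : Fin n, (j : ℕ) = i + 1 ∧ IsYamanouchi (Y ∘ Equiv.swap i j) ∧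
      prefixDist (Y ∘ Equiv.swap i j) Z + 1 = prefixDist Y Z := by
  obtain ⟨i, j, hij, hcase⟩ := exists_adjacent_toward hw hne
  have hoff (m : ℕ) (hm : m ≠ j) := prefixCount_comp_swap_of_ne Y 1 hij hm
  have hon := prefixCount_comp_swap_at Y 1 hij
  have hstep := prefixCount_val_add_one Y 1 i
  rw [← hij] at hstep
  have hYj := (isYamanouchi_iff Y).mp hY j
  have hZj := (isYamanouchi_iff Z).mp hZ j
  have hcloser : Nat.dist (prefixCount (Y ∘ Equiv.swap i j) 1 j) (prefixCount Z 1 j) + 1 =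
        Nat.dist (prefixCount Y 1 j) (prefixCount Z 1 j) ∧
      2 * prefixCount (Y ∘ Equiv.swap i j) 1 j ≤ min (j : ℕ) n := by
    unfold Nat.dist
    rcases hcase with ⟨hi, hj, hlt⟩ | ⟨hi, hj, hlt⟩ <;>
      simp only [hi, hj, zero_ne_one, ↓reduceIte, add_zero] at hon hstep <;> omega
  refine ⟨i, j, hij, (isYamanouchi_iff _).mpr fun m => ?_,
    sum_dist_add_one_of_eq_of_ne (mem_range.mpr j.isLt) hoff hcloser.1⟩
  rcases eq_or_ne m j with rfl | hm
  · exact hcloser.2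
  · rw [hoff m hm]
    exact (isYamanouchi_iff Y).mp hY m

theorem exists_yamanouchi_swaps {Y Z : Fin n → Fin 2} (hY : IsYamanouchi Y)
    (hZ : IsYamanouchi Z) (hw : prefixCount Y 1 n = prefixCount Z 1 n) :
    ∃ L : List (Fin n × Fin n), (∀ p ∈ L, (p.2 : ℕ) = p.1 + 1) ∧
      L.length = prefixDist Y Z ∧ (∀ t, IsYamanouchi (applySwaps (L.take t) Y)) ∧
      applySwaps L Y = Z := by
  induction hd : prefixDist Y Z generalizing Y with
  | zero =>
    obtain rfl := eq_of_prefixDist_eq_zero hw hd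
    exact ⟨[], by simp, rfl, fun t => by simpa [applySwaps] using hY, rfl⟩
  | succ d ih =>
    obtain ⟨i, j, hij, hY', hd'⟩ :=
      exists_adjacent_swap_closer hY hZ hw (by rintro rfl; simp [prefixDist] at hd)
    obtain ⟨L, hL, hlen, hyam, hend⟩ :=
      ih hY' ((prefixCount_comp_swap_of_ne Y 1 hij (by omega)).trans hw) (by omega)
    refine ⟨(i, j) :: L, by simpa [hij] using hL, by simp [hlen], ?_, hend⟩
    rintro (_ | t)
    · simpa [applySwaps] using hY
    · exact hyam t

end Binary

/-- Any two valid Yamanouchi symbols of even length `n` with the same number of 1s are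
connected by at most `n(n-2)/4` adjacent transpositions, all of whose intermediate words
are valid Yamanouchi symbols. -/
theorem yamanouchi_connectivity (n : ℕ) (hn : Even n) (Y₁ Y₂ : Fin n → Fin 2)
    (h1 : IsYamanouchi Y₁) (h2 : IsYamanouchi Y₂)
    (hw : (Finset.univ.filter fun i => Y₁ i = 1).card
        = (Finset.univ.filter fun i => Y₂ i = 1).card) :
    ∃ L : List (Fin n × Fin n),
      (∀ p ∈ L, (p.2 : ℕ) = (p.1 : ℕ) + 1)
      ∧ L.length ≤ n * (n - 2) / 4
      ∧ (∀ t : ℕ, IsYamanouchi (applySwaps (L.take t) Y₁))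
      ∧ applySwaps L Y₁ = Y₂ := by
  obtain ⟨L, hadj, hlen, hyam, hend⟩ :=
    exists_yamanouchi_swaps h1 h2 (by rwa [prefixCount_self, prefixCount_self])
  exact ⟨L, hadj, hlen ▸ prefixDist_le h1 h2 hn, hyam, hend⟩
end
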